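/- (Localization lemma) Assume doubling. There exists K₀ depending only on the doubling constant with the following property: if B is a ball and x̄ ∈ B satisfies CF(x̄) ≤ λ, then for every K ≥ K₀, the set {x ∈ B : CF(x) > Kλ} is contained in {x : C(χ_{T(3B)}F)(x) > (K/K₀)·λ}. -/

import Mathlib

/-!
Let `ball c t ∋ x` be a ball on which the tent average of `F` exceeds `Kλ`. If `t ≤ r`, the
ball lies in `3B`, so truncating `F` to `T(3B)` does not change that average. If `t > r`, then
`x̄ ∈ ball c (3t)`, and doubling (`μ(ball c (3t)) ≤ C₀² μ(ball c t)`) bounds the average over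
`ball c t` by `C₀ · CF(x̄) ≤ C₀ λ < Kλ`, which is impossible. So `K₀ = C₀ + 1` works.
-/

open Metric MeasureTheory ENNReal Classical

/-- The tent over a set `O`. -/
def tent {X : Type*} [MetricSpace X] (O : Set X) : Set (ℝ × X) :=
  {p | ∀ z ∉ O, p.1 ≤ dist p.2 z}

/-- `∫_{T(B)} |F(t,y)|² dy dt/t`. -/
noncomputable def tentInt {X : Type*} [MetricSpace X] [MeasurableSpace X]
    (μ : Measure X) (F : ℝ → X → ℝ≥0∞) (B : Set X) : ℝ≥0∞ :=
  ∫⁻ t in Set.Ioi (0 : ℝ),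
    (∫⁻ y in {y | (t, y) ∈ tent B}, (F t y) ^ 2 ∂μ) / ENNReal.ofReal t

/-- Tent maximal function `CF(x)`. -/
noncomputable def tentMax {X : Type*} [MetricSpace X] [MeasurableSpace X]
    (μ : Measure X) (F : ℝ → X → ℝ≥0∞) (x : X) : ℝ≥0∞ :=
  ⨆ (x₀ : X) (t : ℝ) (_ : x ∈ ball x₀ t),
    (tentInt μ F (ball x₀ t) / μ (ball x₀ t)) ^ (1/2 : ℝ)

theorem ENNReal.div_le_mul_div {a a' b b' C : ℝ≥0∞} (ha : a ≤ a') (hb : b' ≤ C * b)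
    (hC₀ : C ≠ 0) (hC : C ≠ ⊤) : a / b ≤ C * (a' / b') := by
  have hinv : b⁻¹ ≤ C * b'⁻¹ :=
    calc b⁻¹ = C * (C⁻¹ * b⁻¹) := by rw [← mul_assoc, ENNReal.mul_inv_cancel hC₀ hC, one_mul]
      _ = C * (C * b)⁻¹ := by rw [ENNReal.mul_inv (.inl hC₀) (.inl hC)]
      _ ≤ C * b'⁻¹ := by gcongr
  calc a / b = a * b⁻¹ := div_eq_mul_inv a b
    _ ≤ a' * (C * b'⁻¹) := by gcongr
    _ = C * (a' / b') := by rw [div_eq_mul_inv]; ring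

theorem ball_subset_ball_three_mul_of_mem {X : Type*} [PseudoMetricSpace X]
    {x a c : X} {r t : ℝ} (hxa : x ∈ ball a r) (hxc : x ∈ ball c t) (htr : t ≤ r) :
    ball c t ⊆ ball a (3 * r) := by
  refine ball_subset_ball' ?_
  have := dist_triangle c x a
  rw [mem_ball, dist_comm] at hxc
  rw [mem_ball] at hxa
  linarith

section

variable {X : Type*} [MetricSpace X]

theorem tent_mono {O O' : Set X} (h : O ⊆ O') : tent O ⊆ tent O' :=
  fun _ hp z hz => hp z (fun hzO => hz (h hzO))

theorem isClosed_setOf_mem_tent (O : Set X) (t : ℝ) :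
    IsClosed {y : X | (t, y) ∈ tent O} := by
  have hslice : {y : X | (t, y) ∈ tent O} = ⋂ z ∈ Oᶜ, {y | t ≤ dist y z} := by
    ext y
    simp [tent]
  rw [hslice]
  exact isClosed_biInter fun z _ =>
    isClosed_le continuous_const (continuous_id.dist continuous_const)

variable [MeasurableSpace X]

theorem tentInt_mono (μ : Measure X) (F : ℝ → X → ℝ≥0∞) {B B' : Set X} (h : B ⊆ B') :
    tentInt μ F B ≤ tentInt μ F B' :=
  lintegral_mono fun t =>
    ENNReal.div_le_div_right (lintegral_mono_set fun y (hy : (t, y) ∈ tent B) => tent_mono h hy) _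

theorem tentInt_truncate_of_subset [BorelSpace X] (μ : Measure X) (F : ℝ → X → ℝ≥0∞)
    {B O : Set X} (h : B ⊆ O) :
    tentInt μ (fun t y => if (t, y) ∈ tent O then F t y else 0) B = tentInt μ F B := by
  refine lintegral_congr fun t => ?_
  congr 1
  refine setLIntegral_congr_fun (isClosed_setOf_mem_tent B t).measurableSet fun y hy => ?_
  simp [tent_mono h hy]

noncomputable def tentAvg (μ : Measure X) (F : ℝ → X → ℝ≥0∞) (B : Set X) : ℝ≥0∞ :=
  (tentInt μ F B / μ B) ^ (1/2 : ℝ)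

theorem tentAvg_le_tentMax (μ : Measure X) (F : ℝ → X → ℝ≥0∞) {x c : X} {t : ℝ}
    (hx : x ∈ ball c t) :
    tentAvg μ F (ball c t) ≤ tentMax μ F x :=
  le_iSup₂_of_le c t (le_iSup_of_le hx le_rfl)

theorem exists_lt_tentAvg_of_lt_tentMax {μ : Measure X} {F : ℝ → X → ℝ≥0∞} {x : X} {a : ℝ≥0∞}
    (h : a < tentMax μ F x) :
    ∃ c t, x ∈ ball c t ∧ a < tentAvg μ F (ball c t) := by
  simpa only [tentMax, tentAvg, lt_iSup_iff, exists_prop] using h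

theorem measure_ball_three_mul_le {μ : Measure X} {C₀ : ℝ≥0∞}
    (hdouble : ∀ (x : X) (r : ℝ), 0 < r → μ (ball x (2 * r)) ≤ C₀ * μ (ball x r))
    (c : X) {t : ℝ} (ht : 0 < t) : μ (ball c (3 * t)) ≤ C₀ ^ 2 * μ (ball c t) :=
  calc μ (ball c (3 * t)) ≤ μ (ball c (2 * (2 * t))) :=
        measure_mono (ball_subset_ball (by linarith))
    _ ≤ C₀ * μ (ball c (2 * t)) := hdouble c (2 * t) (by linarith)
    _ ≤ C₀ * (C₀ * μ (ball c t)) := by gcongr; exact hdouble c t ht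
    _ = C₀ ^ 2 * μ (ball c t) := by ring

theorem tentAvg_ball_le_mul_tentAvg_ball_three_mul {μ : Measure X} {C₀ : NNReal}
    (hC₀ : 0 < C₀)
    (hdouble : ∀ (x : X) (r : ℝ), 0 < r → μ (ball x (2 * r)) ≤ (C₀ : ℝ≥0∞) * μ (ball x r))
    (F : ℝ → X → ℝ≥0∞) (c : X) {t : ℝ} (ht : 0 < t) :
    tentAvg μ F (ball c t) ≤ C₀ * tentAvg μ F (ball c (3 * t)) := by
  have hmono : tentInt μ F (ball c t) ≤ tentInt μ F (ball c (3 * t)) :=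
    tentInt_mono μ F (ball_subset_ball (by linarith))
  have havg := ENNReal.div_le_mul_div hmono (measure_ball_three_mul_le hdouble c ht)
    (pow_ne_zero 2 (by exact_mod_cast hC₀.ne')) (pow_ne_top coe_ne_top)
  calc tentAvg μ F (ball c t)
      ≤ ((C₀ : ℝ≥0∞) ^ 2 * (tentInt μ F (ball c (3 * t)) / μ (ball c (3 * t)))) ^ (1/2 : ℝ) :=
        ENNReal.rpow_le_rpow havg (by norm_num)
    _ = C₀ * tentAvg μ F (ball c (3 * t)) := by
        rw [tentAvg, ENNReal.mul_rpow_of_nonneg _ _ (by norm_num), ← ENNReal.rpow_natCast,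
          ← ENNReal.rpow_mul]
        norm_num

end

theorem stmt_10 {X : Type*} [MetricSpace X] [MeasurableSpace X] [BorelSpace X]
    (μ : Measure X) (C₀ : NNReal) (hC₀ : 0 < C₀)
    (hdouble : ∀ (x : X) (r : ℝ), 0 < r → μ (ball x (2 * r)) ≤ (C₀ : ℝ≥0∞) * μ (ball x r)) :
    ∃ K₀ : ℝ≥0∞, 1 ≤ K₀ ∧ K₀ < ⊤ ∧
      ∀ (F : ℝ → X → ℝ≥0∞) (x₀ : X) (r : ℝ) (xb : X) (lam : ℝ≥0∞),
        0 < r → xb ∈ ball x₀ r → tentMax μ F xb ≤ lam →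
        ∀ K : ℝ≥0∞, K₀ ≤ K →
          {x ∈ ball x₀ r | K * lam < tentMax μ F x} ⊆
            {x | (K / K₀) * lam <
              tentMax μ (fun t y => if (t, y) ∈ tent (ball x₀ (3 * r)) then F t y else 0) x} := by
  refine ⟨C₀ + 1, le_add_self, by simp, ?_⟩
  intro F x₀ r xb lam hr hxb hlam K hK x ⟨hxB, hx⟩
  obtain ⟨c, t, hxc, hlt⟩ := exists_lt_tentAvg_of_lt_tentMax hx
  rcases le_or_gt t r with htr | hrt
  · have hsub := ball_subset_ball_three_mul_of_mem hxB hxc htr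
    calc K / (C₀ + 1) * lam ≤ K * lam := by
          gcongr
          exact ENNReal.div_le_of_le_mul (le_mul_of_one_le_right' le_add_self)
      _ < tentAvg μ F (ball c t) := hlt
      _ = _ := by rw [tentAvg, tentAvg, tentInt_truncate_of_subset μ F hsub]
      _ ≤ _ := tentAvg_le_tentMax _ _ hxc
  · have ht : 0 < t := hr.trans hrt
    have hxb3 : xb ∈ ball c (3 * t) := ball_subset_ball_three_mul_of_mem hxc hxB hrt.le hxb
    have hC₀K : (C₀ : ℝ≥0∞) ≤ K := le_self_add.trans hK
    refine absurd hlt (not_lt.2 ?_)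
    calc tentAvg μ F (ball c t) ≤ C₀ * tentAvg μ F (ball c (3 * t)) :=
          tentAvg_ball_le_mul_tentAvg_ball_three_mul hC₀ hdouble F c ht
      _ ≤ K * lam := by gcongr; exact (tentAvg_le_tentMax μ F hxb3).trans hlam
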